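/- arXiv:1910.09842 — 3 statements merged into one kernel-verified Lean document; each statement's English description precedes it below -/
import Mathlib

section
/- Strict improvement under simultaneous charging and discharging with lossy storage: if P_ch > 0, P_dch > 0, and η_ch·η_dch < 1, then the change in net discharge power under the EEC transform is strictly positive: (P̃_dch − P̃_ch) − (P_dch − P_ch) > 0. -/
/-!
With `r = η_ch η_dch < 1`: if `ΔE ≥ 0` the transform replaces the pair by pure charging at
`P_ch - P_dch / r`, gaining `P_dch (r⁻¹ - 1) > 0`; if `ΔE < 0` it replaces it by pure discharging
at `P_dch - P_ch r`, gaining `P_ch (1 - r) > 0`.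
-/

section

variable {Pch Pdch ηch ηdch ΔT r : ℝ}

lemma net_energy_div_charge_eq (hΔT : ΔT ≠ 0) (hηch : ηch ≠ 0) (hηdch : ηdch ≠ 0) :
    ΔT * (Pch * ηch - Pdch / ηdch) / (ηch * ΔT) = Pch - Pdch / (ηch * ηdch) := by
  field_simp

lemma neg_net_energy_mul_discharge_eq (hΔT : ΔT ≠ 0) (hηdch : ηdch ≠ 0) :
    -(ΔT * (Pch * ηch - Pdch / ηdch)) * ηdch / ΔT = Pdch - Pch * (ηch * ηdch) := by
  field_simp
  ring

lemma net_discharge_gain_of_charging_pos (hPdch : 0 < Pdch) (hr₀ : 0 < r) (hr₁ : r < 1) :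
    0 < (0 - (Pch - Pdch / r)) - (Pdch - Pch) := by
  rw [show (0 - (Pch - Pdch / r)) - (Pdch - Pch) = Pdch * (r⁻¹ - 1) by ring]
  exact mul_pos hPdch (sub_pos.2 ((one_lt_inv₀ hr₀).2 hr₁))

lemma net_discharge_gain_of_discharging_pos (hPch : 0 < Pch) (hr₁ : r < 1) :
    0 < (Pdch - Pch * r - 0) - (Pdch - Pch) := by
  rw [show (Pdch - Pch * r - 0) - (Pdch - Pch) = Pch * (1 - r) by ring]
  exact mul_pos hPch (sub_pos.2 hr₁)

end

/-- Strict improvement under simultaneous charging and discharging with lossy storage. -/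
theorem eec_strict_improvement
    (Pch Pdch ηch ηdch ΔT : ℝ)
    (hPch : 0 < Pch) (hPdch : 0 < Pdch)
    (hηch : ηch ∈ Set.Ioo (0:ℝ) 1) (hηdch : ηdch ∈ Set.Ioo (0:ℝ) 1)
    (hloss : ηch * ηdch < 1)
    (hΔT : 0 < ΔT) :
    let ΔE := ΔT * (Pch * ηch - Pdch / ηdch)
    let Pch' := if 0 ≤ ΔE then ΔE / (ηch * ΔT) else 0
    let Pdch' := if 0 ≤ ΔE then 0 else -ΔE * ηdch / ΔT
    (Pdch' - Pch') - (Pdch - Pch) > 0 := by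
  intro ΔE Pch' Pdch'
  simp only [Pch', Pdch', ΔE]
  split_ifs
  · rw [net_energy_div_charge_eq hΔT.ne' hηch.1.ne' hηdch.1.ne']
    exact net_discharge_gain_of_charging_pos hPdch (mul_pos hηch.1 hηdch.1) hloss
  · rw [neg_net_energy_mul_discharge_eq hΔT.ne' hηdch.1.ne']
    exact net_discharge_gain_of_discharging_pos hPch hloss
end

section
/- The EEC transform respects the original power bounds: if 0 ≤ P_ch ≤ P̄_ch and 0 ≤ P_dch ≤ P̄_dch, then the transformed pair satisfies 0 ≤ P̃_ch ≤ P̄_ch and 0 ≤ P̃_dch ≤ P̄_dch. In particular, if ΔE ≥ 0 then P̃_ch = P_ch − P_dch/(η_ch·η_dch) ≤ P_ch, and if ΔE < 0 then P̃_dch = P_dch − P_ch·η_ch·η_dch ≤ P_dch. -/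
/-!
The EEC transform nets the two powers into one: whichever power survives equals the original
power minus a nonnegative multiple of the other one, so it lies between `0` and the original power
and inherits its upper bound.
-/

open Set

section EnergyEquivalentPowers

variable {Pch Pdch ηch ηdch ΔT : ℝ}

theorem charge_of_energy_eq (hηch : ηch ≠ 0) (hΔT : ΔT ≠ 0) :
    ΔT * (Pch * ηch - Pdch / ηdch) / (ηch * ΔT) = Pch - Pdch / (ηch * ηdch) := by
  field_simp

theorem discharge_of_energy_eq (hηdch : ηdch ≠ 0) (hΔT : ΔT ≠ 0) :
    -(ΔT * (Pch * ηch - Pdch / ηdch)) * ηdch / ΔT = Pdch - Pch * ηch * ηdch := by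
  field_simp
  ring

theorem charge_of_energy_mem_Icc (hPdch : 0 ≤ Pdch) (hηch : 0 < ηch) (hηdch : 0 < ηdch)
    (hΔT : 0 < ΔT) (hE : 0 ≤ ΔT * (Pch * ηch - Pdch / ηdch)) :
    ΔT * (Pch * ηch - Pdch / ηdch) / (ηch * ΔT) ∈ Icc 0 Pch := by
  refine ⟨by positivity, ?_⟩
  rw [charge_of_energy_eq hηch.ne' hΔT.ne']
  exact sub_le_self _ (by positivity)

theorem discharge_of_energy_mem_Icc (hPch : 0 ≤ Pch) (hηch : 0 < ηch) (hηdch : 0 < ηdch)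
    (hΔT : 0 < ΔT) (hE : ΔT * (Pch * ηch - Pdch / ηdch) < 0) :
    -(ΔT * (Pch * ηch - Pdch / ηdch)) * ηdch / ΔT ∈ Icc 0 Pdch := by
  have : 0 < -(ΔT * (Pch * ηch - Pdch / ηdch)) := neg_pos.2 hE
  refine ⟨by positivity, ?_⟩
  rw [discharge_of_energy_eq hηdch.ne' hΔT.ne']
  exact sub_le_self _ (by positivity)

end EnergyEquivalentPowers

theorem eec_respects_bounds_general
    (Pch Pdch PchMax PdchMax ηch ηdch ΔT : ℝ)
    (hPch : 0 ≤ Pch) (hPchUB : Pch ≤ PchMax)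
    (hPdch : 0 ≤ Pdch) (hPdchUB : Pdch ≤ PdchMax)
    (hηch : ηch ∈ Set.Ioc (0:ℝ) 1) (hηdch : ηdch ∈ Set.Ioc (0:ℝ) 1)
    (hΔT : 0 < ΔT) :
    let ΔE := ΔT * (Pch * ηch - Pdch / ηdch)
    let Pch' := if 0 ≤ ΔE then ΔE / (ηch * ΔT) else 0
    let Pdch' := if 0 ≤ ΔE then 0 else -ΔE * ηdch / ΔT
    (0 ≤ Pch' ∧ Pch' ≤ PchMax) ∧ (0 ≤ Pdch' ∧ Pdch' ≤ PdchMax) ∧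
    (0 ≤ ΔE → Pch' = Pch - Pdch / (ηch * ηdch) ∧ Pch' ≤ Pch) ∧
    (ΔE < 0 → Pdch' = Pdch - Pch * ηch * ηdch ∧ Pdch' ≤ Pdch) := by
  intro ΔE Pch' Pdch'
  by_cases hE : 0 ≤ ΔE
  · have hch := charge_of_energy_mem_Icc hPdch hηch.1 hηdch.1 hΔT hE
    simp only [Pch', Pdch', if_pos hE]
    exact ⟨⟨hch.1, hch.2.trans hPchUB⟩, ⟨le_rfl, hPdch.trans hPdchUB⟩,
      fun _ ↦ ⟨charge_of_energy_eq hηch.1.ne' hΔT.ne', hch.2⟩, fun h ↦ absurd hE h.not_ge⟩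
  · have hE : ΔE < 0 := not_le.1 hE
    have hdch := discharge_of_energy_mem_Icc hPch hηch.1 hηdch.1 hΔT hE
    simp only [Pch', Pdch', if_neg hE.not_ge]
    exact ⟨⟨le_rfl, hPch.trans hPchUB⟩, ⟨hdch.1, hdch.2.trans hPdchUB⟩,
      fun h ↦ absurd h hE.not_ge, fun _ ↦ ⟨discharge_of_energy_eq hηdch.1.ne' hΔT.ne', hdch.2⟩⟩

/-- The EEC transform respects the original power bounds. -/
theorem eec_respects_bounds
    (Pch Pdch PchMax PdchMax ηch ηdch ΔT : ℝ)
    (hPch : 0 ≤ Pch) (hPchUB : Pch ≤ PchMax)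
    (hPdch : 0 ≤ Pdch) (hPdchUB : Pdch ≤ PdchMax)
    (hPchMax : 0 ≤ PchMax) (hPdchMax : 0 ≤ PdchMax)
    (hηch : ηch ∈ Set.Ioc (0:ℝ) 1) (hηdch : ηdch ∈ Set.Ioc (0:ℝ) 1)
    (hΔT : 0 < ΔT) :
    let ΔE := ΔT * (Pch * ηch - Pdch / ηdch)
    let Pch' := if 0 ≤ ΔE then ΔE / (ηch * ΔT) else 0
    let Pdch' := if 0 ≤ ΔE then 0 else -ΔE * ηdch / ΔT
    (0 ≤ Pch' ∧ Pch' ≤ PchMax) ∧ (0 ≤ Pdch' ∧ Pdch' ≤ PdchMax) ∧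
    (0 ≤ ΔE → Pch' = Pch - Pdch / (ηch * ηdch) ∧ Pch' ≤ Pch) ∧
    (ΔE < 0 → Pdch' = Pdch - Pch * ηch * ηdch ∧ Pdch' ≤ Pdch) :=
  eec_respects_bounds_general Pch Pdch PchMax PdchMax ηch ηdch ΔT hPch hPchUB hPdch hPdchUB hηch
    hηdch hΔT
end

section
/- Feasibility of the adjusted curtailment (key step of Theorem 2): suppose 0 ≤ P_curt ≤ P_res, η_ch·η_dch < 1, and (P_res − P_curt)/(1 − η_ch·η_dch) ≥ min(P_ch, P_dch/(η_ch·η_dch)). Then the adjusted curtailment P̃_curt := P_curt + ΔP, where ΔP = (P̃_dch − P̃_ch) − (P_dch − P_ch) is the change in net discharge under the EEC transform, satisfies 0 ≤ P̃_curt ≤ P_res. -/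
/-!
Write `k = η_ch η_dch`. The EEC transform keeps only the net stored energy, so in both branches
the net discharge grows by exactly `(1 - k) · min(P_ch, P_dch / k)`: the energy lost to the
round trip over the overlap of charging and discharging. This is nonnegative, so curtailment only
increases, and the hypothesis on `P_res - P_curt` says it fits in the remaining headroom.
-/

theorem eec_energy_nonneg_iff {Pch Pdch ηch ηdch ΔT : ℝ} (hηch : 0 < ηch) (hΔT : 0 < ΔT) :
    0 ≤ ΔT * (Pch * ηch - Pdch / ηdch) ↔ Pdch / (ηch * ηdch) ≤ Pch := by
  rw [mul_nonneg_iff_of_pos_left hΔT, sub_nonneg, mul_comm ηch, ← div_div, div_le_iff₀ hηch]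

theorem eec_net_discharge_change {Pch Pdch ηch ηdch ΔT : ℝ}
    (hηch : 0 < ηch) (hηdch : 0 < ηdch) (hΔT : 0 < ΔT) :
    let ΔE := ΔT * (Pch * ηch - Pdch / ηdch)
    ((if 0 ≤ ΔE then 0 else -ΔE * ηdch / ΔT) - (if 0 ≤ ΔE then ΔE / (ηch * ΔT) else 0))
        - (Pdch - Pch)
      = (1 - ηch * ηdch) * min Pch (Pdch / (ηch * ηdch)) := by
  intro ΔE
  split_ifs with hE
  · rw [min_eq_right ((eec_energy_nonneg_iff hηch hΔT).1 hE)]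
    simp only [ΔE]
    field_simp
    ring
  · rw [min_eq_left (le_of_not_ge ((eec_energy_nonneg_iff hηch hΔT).not.1 hE))]
    simp only [ΔE]
    field_simp
    ring

theorem eec_adjusted_curtailment_feasible_general
    (Pres Pcurt Pch Pdch ηch ηdch ΔT : ℝ)
    (hPcurt : 0 ≤ Pcurt)
    (hPch : 0 ≤ Pch) (hPdch : 0 ≤ Pdch)
    (hηch : ηch ∈ Set.Ioo (0:ℝ) 1) (hηdch : ηdch ∈ Set.Ioo (0:ℝ) 1)
    (hloss : ηch * ηdch < 1)
    (hΔT : 0 < ΔT)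
    (hcond : (Pres - Pcurt) / (1 - ηch * ηdch) ≥
      min Pch (Pdch / (ηch * ηdch))) :
    let ΔE := ΔT * (Pch * ηch - Pdch / ηdch)
    let Pch' := if 0 ≤ ΔE then ΔE / (ηch * ΔT) else 0
    let Pdch' := if 0 ≤ ΔE then 0 else -ΔE * ηdch / ΔT
    let ΔP := (Pdch' - Pch') - (Pdch - Pch)
    let Pcurt' := Pcurt + ΔP
    0 ≤ Pcurt' ∧ Pcurt' ≤ Pres := by
  intro ΔE Pch' Pdch' ΔP Pcurt'
  have hΔP : ΔP = (1 - ηch * ηdch) * min Pch (Pdch / (ηch * ηdch)) :=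
    eec_net_discharge_change hηch.1 hηdch.1 hΔT
  have hloss' : 0 < 1 - ηch * ηdch := sub_pos.2 hloss
  have hmin : 0 ≤ min Pch (Pdch / (ηch * ηdch)) :=
    le_min hPch (div_nonneg hPdch (mul_pos hηch.1 hηdch.1).le)
  have hΔP_le : ΔP ≤ Pres - Pcurt := by
    rw [hΔP, mul_comm]
    exact (le_div_iff₀ hloss').1 hcond
  have hΔP_nonneg : 0 ≤ ΔP := hΔP ▸ mul_nonneg hloss'.le hmin
  exact ⟨add_nonneg hPcurt hΔP_nonneg, by linarith⟩

/-- Feasibility of the adjusted curtailment (key step of Theorem 2). -/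
theorem eec_adjusted_curtailment_feasible
    (Pres Pcurt Pch Pdch ηch ηdch ΔT : ℝ)
    (hPres : 0 ≤ Pres)
    (hPcurt : 0 ≤ Pcurt) (hPcurtUB : Pcurt ≤ Pres)
    (hPch : 0 ≤ Pch) (hPdch : 0 ≤ Pdch)
    (hηch : ηch ∈ Set.Ioo (0:ℝ) 1) (hηdch : ηdch ∈ Set.Ioo (0:ℝ) 1)
    (hloss : ηch * ηdch < 1)
    (hΔT : 0 < ΔT)
    (hcond : (Pres - Pcurt) / (1 - ηch * ηdch) ≥
      min Pch (Pdch / (ηch * ηdch))) :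
    let ΔE := ΔT * (Pch * ηch - Pdch / ηdch)
    let Pch' := if 0 ≤ ΔE then ΔE / (ηch * ΔT) else 0
    let Pdch' := if 0 ≤ ΔE then 0 else -ΔE * ηdch / ΔT
    let ΔP := (Pdch' - Pch') - (Pdch - Pch)
    let Pcurt' := Pcurt + ΔP
    0 ≤ Pcurt' ∧ Pcurt' ≤ Pres :=
  eec_adjusted_curtailment_feasible_general Pres Pcurt Pch Pdch ηch ηdch ΔT hPcurt hPch hPdch hηch
    hηdch hloss hΔT hcond
end
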